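/- Let X be a real Banach space, Y a closed subspace of X, and Z a weak*-closed subspace of X* that is norm-attaining for Y. Then: (1) Y ∩ Z^⊤ = {0}; (2) ‖y‖ ≤ ‖y + z‖ for all y ∈ Y and all z ∈ Z^⊤; (3) Y + Z^⊤ is a closed subspace of X. -/

import Mathlib

/-- A subspace `Z` of the dual of `X` is **weak*-closed** if its image in `WeakDual ℝ X`
is closed in the weak-* topology. -/
def WeakStarClosed {X : Type*} [NormedAddCommGroup X] [NormedSpace ℝ X]
    (Z : Submodule ℝ (X →L[ℝ] ℝ)) : Prop :=
  IsClosed (StrongDual.toWeakDual '' (Z : Set (X →L[ℝ] ℝ)) : Set (WeakDual ℝ X))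

/-- `Z ⊆ X*` is **norm-attaining for** the subspace `Y ⊆ X` if every norm-one element of `Y`
is sent to `1` by some norm-one functional in `Z`. -/
def NormAttainingFor {X : Type*} [NormedAddCommGroup X] [NormedSpace ℝ X]
    (Y : Submodule ℝ X) (Z : Submodule ℝ (X →L[ℝ] ℝ)) : Prop :=
  ∀ y ∈ Y, ‖y‖ = 1 → ∃ f ∈ Z, ‖f‖ = 1 ∧ f y = 1

/-- The **pre-annihilator** `Z^⊤` of a subspace `Z` of the dual of `X`. -/
def preAnn {X : Type*} [NormedAddCommGroup X] [NormedSpace ℝ X]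
    (Z : Submodule ℝ (X →L[ℝ] ℝ)) : Submodule ℝ X where
  carrier := {x | ∀ f ∈ Z, f x = 0}
  add_mem' := by intro a b ha hb f hf; simp [ha f hf, hb f hf]
  zero_mem' := by intro f hf; simp
  smul_mem' := by intro c x hx f hf; simp [hx f hf]

/-! A norm-one functional `f ∈ Z` with `f y = ‖y‖` kills `Z^⊤`, so `‖y‖ = f (y + z) ≤ ‖y + z‖`.
Taking `z = -y` gives `Y ∩ Z^⊤ = 0`. The same inequality bounds both components of `y + z` by
`2 ‖y + z‖`, so summation `Y × Z^⊤ → X` is antilipschitz from a complete space and its range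
`Y + Z^⊤` is complete, hence closed. -/

theorem isClosed_preAnn {X : Type*} [NormedAddCommGroup X] [NormedSpace ℝ X]
    (Z : Submodule ℝ (X →L[ℝ] ℝ)) : IsClosed (preAnn Z : Set X) := by
  have : (preAnn Z : Set X) = ⋂ f ∈ Z, {x | f x = 0} := by ext; simp [preAnn]
  exact this ▸ isClosed_biInter fun f _ ↦ isClosed_eq f.continuous continuous_const

namespace NormAttainingFor

variable {X : Type*} [NormedAddCommGroup X] [NormedSpace ℝ X] {Y : Submodule ℝ X}
  {Z : Submodule ℝ (X →L[ℝ] ℝ)}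

theorem exists_apply_eq_norm (hZ : NormAttainingFor Y Z) {y : X} (hy : y ∈ Y) :
    ∃ f ∈ Z, ‖f‖ ≤ 1 ∧ f y = ‖y‖ := by
  rcases eq_or_ne y 0 with rfl | hy0
  · exact ⟨0, Z.zero_mem, by simp⟩
  have hny : ‖y‖ ≠ 0 := norm_ne_zero_iff.mpr hy0
  obtain ⟨f, hfZ, hf1, hfy⟩ := hZ (‖y‖⁻¹ • y) (Y.smul_mem _ hy)
    (by rw [norm_smul, norm_inv, norm_norm, inv_mul_cancel₀ hny])
  rw [map_smul, smul_eq_mul, inv_mul_eq_one₀ hny] at hfy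
  exact ⟨f, hfZ, hf1.le, hfy.symm⟩

theorem norm_le_norm_add (hZ : NormAttainingFor Y Z) {y z : X} (hy : y ∈ Y)
    (hz : z ∈ preAnn Z) : ‖y‖ ≤ ‖y + z‖ := by
  obtain ⟨f, hfZ, hf1, hfy⟩ := hZ.exists_apply_eq_norm hy
  calc ‖y‖ = f (y + z) := by rw [map_add, hz f hfZ, add_zero, hfy]
    _ ≤ ‖f‖ * ‖y + z‖ := (le_abs_self _).trans (f.le_opNorm _)
    _ ≤ ‖y + z‖ := mul_le_of_le_one_left (norm_nonneg _) hf1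

end NormAttainingFor

namespace Submodule

theorem inf_eq_bot_of_norm_le_norm_add {R E : Type*} [Ring R] [NormedAddCommGroup E] [Module R E]
    {Y W : Submodule R E} (h : ∀ y ∈ Y, ∀ w ∈ W, ‖y‖ ≤ ‖y + w‖) : Y ⊓ W = ⊥ :=
  eq_bot_iff.2 fun x hx ↦ by simpa using h x hx.1 (-x) (W.neg_mem hx.2)

theorem isClosed_sup_of_norm_le_norm_add {𝕜 E : Type*} [NormedField 𝕜] [NormedAddCommGroup E]
    [NormedSpace 𝕜 E] [CompleteSpace E] {Y W : Submodule 𝕜 E} (hY : IsClosed (Y : Set E))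
    (hW : IsClosed (W : Set E)) (h : ∀ y ∈ Y, ∀ w ∈ W, ‖y‖ ≤ ‖y + w‖) :
    IsClosed ((Y ⊔ W : Submodule 𝕜 E) : Set E) := by
  have := hY.completeSpace_coe
  have := hW.completeSpace_coe
  let sum : Y × W →L[𝕜] E := Y.subtypeL.coprod W.subtypeL
  have hsum : AntilipschitzWith 2 sum := by
    refine AddMonoidHomClass.antilipschitz_of_bound sum fun ⟨y, w⟩ ↦ ?_
    have hy := h y y.2 w w.2
    have hw : ‖(w : E)‖ ≤ ‖(y : E) + w‖ + ‖(y : E)‖ := by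
      simpa using norm_sub_le ((y : E) + w) y
    simp only [Prod.norm_mk, sum, ContinuousLinearMap.coprod_apply, coe_subtypeL, coe_subtype,
      coe_norm, NNReal.coe_ofNat, sup_le_iff]
    constructor <;> linarith [norm_nonneg ((y : E) + w)]
  have hrange : Set.range sum = ((Y ⊔ W : Submodule 𝕜 E) : Set E) := by
    change Set.range (sum : Y × W →ₗ[𝕜] E) = _
    rw [← LinearMap.coe_range, ContinuousLinearMap.range_coprod]
    simp
  exact hrange ▸ hsum.isClosed_range sum.uniformContinuous

end Submodule

theorem normAttainingFor_props (X : Type*) [NormedAddCommGroup X] [NormedSpace ℝ X]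
    [CompleteSpace X] (Y : Submodule ℝ X) (hY : IsClosed (Y : Set X))
    (Z : Submodule ℝ (X →L[ℝ] ℝ)) (hZ : NormAttainingFor Y Z) :
    Y ⊓ preAnn Z = ⊥ ∧
    (∀ y ∈ Y, ∀ z ∈ preAnn Z, ‖y‖ ≤ ‖y + z‖) ∧
    IsClosed ((Y ⊔ preAnn Z : Submodule ℝ X) : Set X) := by
  have hnorm : ∀ y ∈ Y, ∀ z ∈ preAnn Z, ‖y‖ ≤ ‖y + z‖ := fun _ hy _ hz ↦
    hZ.norm_le_norm_add hy hz
  exact ⟨Submodule.inf_eq_bot_of_norm_le_norm_add hnorm, hnorm,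
    Submodule.isClosed_sup_of_norm_le_norm_add hY (isClosed_preAnn Z) hnorm⟩
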